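/- Fix a positive integer l, a constant c̄ > 0, and let g : ℝ → ℝ satisfy g(T) > T for all large T. Assume: (i) ∫_T^{g(T)} |ζ(1/2+it)|² dt / ∫_T^{g(T)} |S₁(t)|^{2l} dt = (1/c̄)·ln T + O(1) as T → ∞; (ii) (t_ν) is a Gram sequence satisfying the Titchmarsh-sum asymptotic. For positive integers x, y, z, n with n ≥ 3 set F = (xⁿ + yⁿ)/zⁿ and K_F = 4π⁵·F/(3·c̄⁵), and let E(τ) = (1/τ)·(∫_{K_F·τ}^{g(K_F·τ)} |S₁(t)|^{2l} dt)⁵ · (∫_{K_F·τ}^{g(K_F·τ)} |ζ(1/2+it)|² dt)^{−5} · Σ_{ν : K_F·τ ≤ t_ν ≤ 2·K_F·τ} |ζ(1/2 + i t_ν)|²·|ζ(1/2 + i t_{ν+1})|². Then the following are equivalent: (a) for all positive integers x, y, z, n with n ≥ 3, E(τ) does not converge to 1 as τ → ∞; (b) for all positive integers x, y, z, n with n ≥ 3, xⁿ + yⁿ ≠ zⁿ (the Fermat–Wiles theorem). -/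

import Mathlib

open Filter Topology MeasureTheory

/-- |ζ(σ+it)|² -/
noncomputable def zsq (σ : ℝ) (t : ℝ) : ℝ :=
  ‖riemannZeta (↑σ + ↑t * Complex.I)‖ ^ 2

/-- S₁(t) = (1/π)·∫₀^t arg ζ(1/2 + iu) du -/
noncomputable def S1 (t : ℝ) : ℝ :=
  (1 / Real.pi) * ∫ u in (0:ℝ)..t, Complex.arg (riemannZeta (1/2 + ↑u * Complex.I))

/-- Riemann–Siegel theta function θ(t) = Im log Γ(1/4 + it/2) − (t/2)·ln π. -/
noncomputable def RStheta (t : ℝ) : ℝ :=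
  (Complex.log (Complex.Gamma (1/4 + (↑t/2) * Complex.I))).im - (t/2) * Real.log Real.pi

/-- A Gram sequence: strictly increasing positive reals tending to ∞ with θ(t_ν) = π·ν. -/
def IsGramSeq (tν : ℕ → ℝ) : Prop :=
  StrictMono tν ∧ (∀ ν : ℕ, 1 ≤ ν → 0 < tν ν) ∧ Filter.Tendsto tν Filter.atTop Filter.atTop ∧
    ∀ ν : ℕ, 1 ≤ ν → RStheta (tν ν) = Real.pi * ν

/-- Titchmarsh sum Σ_{T ≤ t_ν ≤ 2T} |ζ(1/2+it_ν)|²·|ζ(1/2+it_{ν+1})|². -/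
noncomputable def TitchSum (tν : ℕ → ℝ) (T : ℝ) : ℝ :=
  ∑' ν : ℕ, if T ≤ tν ν ∧ tν ν ≤ 2 * T then zsq (1/2) (tν ν) * zsq (1/2) (tν (ν+1)) else 0

/-- The Titchmarsh-sum asymptotic (Moser 1991):
Σ_{T ≤ t_ν ≤ 2T} |ζ(1/2+it_ν)|²|ζ(1/2+it_{ν+1})|² = (3/(4π⁵))·T·ln⁵T·(1+O(1/ln T)). -/
def TitchAsymp (tν : ℕ → ℝ) : Prop :=
  ∃ C : ℝ, ∀ᶠ T in Filter.atTop,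
    |TitchSum tν T / (3 / (4 * Real.pi ^ 5) * T * Real.log T ^ 5) - 1| ≤ C / Real.log T

/-!
Write `T = K τ`. Hypothesis (i) says that `∫|ζ|² / ∫|S₁|^{2l}` is asymptotic to `ln T / c̄`, and
the Titchmarsh asymptotic says that the Gram sum is asymptotic to `3 T ln⁵ T / (4π⁵)`. In the
product `E(τ)` the factors `ln⁵ T` cancel, so `E(τ) → 3 K c̄⁵ / (4π⁵)`, which for `K = K_F` is
exactly the Fermat rational `F`. Hence `E(τ) → 1` holds iff `F = 1`, i.e. iff `xⁿ + yⁿ = zⁿ`.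
-/

section Asymptotics

variable {α : Type*} {l : Filter α} {f u : α → ℝ} {C : ℝ}

theorem tendsto_of_abs_sub_le_div {a : ℝ} (hu : Tendsto u l atTop)
    (h : ∀ᶠ x in l, |f x - a| ≤ C / u x) : Tendsto f l (𝓝 a) := by
  rw [tendsto_iff_dist_tendsto_zero]
  exact squeeze_zero' (Eventually.of_forall fun _ => dist_nonneg) h
    (tendsto_const_nhds.div_atTop hu)

theorem tendsto_div_nhds_one_of_abs_sub_le (hu : Tendsto u l atTop)
    (h : ∀ᶠ x in l, |f x - u x| ≤ C) : Tendsto (fun x => f x / u x) l (𝓝 1) := by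
  refine tendsto_of_abs_sub_le_div (C := C) hu ?_
  filter_upwards [h, hu.eventually_gt_atTop 0] with x hx hux
  rw [div_sub_one hux.ne', abs_div, abs_of_pos hux]
  exact div_le_div_of_nonneg_right hx hux.le

theorem Filter.Tendsto.tendsto_nhds_iff_eq {X : Type*} [TopologicalSpace X] [T2Space X]
    [l.NeBot] {φ : α → X} {a : X} (hφ : Tendsto φ l (𝓝 a)) (b : X) :
    Tendsto φ l (𝓝 b) ↔ a = b :=
  ⟨tendsto_nhds_unique hφ, fun h => h ▸ hφ⟩

end Asymptotics

theorem TitchAsymp.tendsto {tν : ℕ → ℝ} (htitch : TitchAsymp tν) :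
    Tendsto (fun T => TitchSum tν T / (3 / (4 * Real.pi ^ 5) * T * Real.log T ^ 5)) atTop
      (𝓝 1) :=
  let ⟨_, hC⟩ := htitch
  tendsto_of_abs_sub_le_div Real.tendsto_log_atTop hC

/-- The functional `E(τ)` of the theorem, with `K_F` replaced by an arbitrary scale `K`. -/
noncomputable def momentProduct (l : ℕ) (g : ℝ → ℝ) (tν : ℕ → ℝ) (K τ : ℝ) : ℝ :=
  (1 / τ) * ((∫ t in (K * τ)..(g (K * τ)), |S1 t| ^ (2 * l)) ^ 5) *
    ((∫ t in (K * τ)..(g (K * τ)), zsq (1/2) t) ^ 5)⁻¹ * TitchSum tν (K * τ)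

theorem momentProduct_eq (l : ℕ) (g : ℝ → ℝ) (tν : ℕ → ℝ) {K τ cbar : ℝ} (hK : K ≠ 0)
    (hτ : τ ≠ 0) (hcbar : cbar ≠ 0) (hlog : Real.log (K * τ) ≠ 0) :
    momentProduct l g tν K τ =
      3 / (4 * Real.pi ^ 5) * K * cbar ^ 5 *
        (TitchSum tν (K * τ) / (3 / (4 * Real.pi ^ 5) * (K * τ) * Real.log (K * τ) ^ 5)) *
        (((∫ t in (K * τ)..(g (K * τ)), zsq (1/2) t) /
            (∫ t in (K * τ)..(g (K * τ)), |S1 t| ^ (2 * l))) /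
          ((1 / cbar) * Real.log (K * τ)))⁻¹ ^ 5 := by
  have hπ : Real.pi ≠ 0 := Real.pi_ne_zero
  unfold momentProduct
  generalize Real.log (K * τ) = L at hlog ⊢
  field_simp

theorem tendsto_momentProduct {l : ℕ} {cbar : ℝ} (hcbar : 0 < cbar) {g : ℝ → ℝ}
    (hquot : ∃ C : ℝ, ∀ᶠ T in atTop,
      |(∫ t in T..(g T), zsq (1/2) t) / (∫ t in T..(g T), |S1 t| ^ (2 * l)) -
        (1 / cbar) * Real.log T| ≤ C)
    {tν : ℕ → ℝ} (htitch : TitchAsymp tν) {K : ℝ} (hK : 0 < K) :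
    Tendsto (momentProduct l g tν K) atTop (𝓝 (3 / (4 * Real.pi ^ 5) * K * cbar ^ 5)) := by
  obtain ⟨C, hC⟩ := hquot
  have hscale : Tendsto (fun τ : ℝ => K * τ) atTop atTop := tendsto_id.const_mul_atTop hK
  have hmain : Tendsto (fun T => (1 / cbar) * Real.log T) atTop atTop :=
    Real.tendsto_log_atTop.const_mul_atTop (by positivity)
  have hquot_ratio := (tendsto_div_nhds_one_of_abs_sub_le hmain hC).comp hscale
  have hlimit :=
    ((tendsto_const_nhds (x := 3 / (4 * Real.pi ^ 5) * K * cbar ^ 5)).mul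
      (htitch.tendsto.comp hscale)).mul ((hquot_ratio.inv₀ one_ne_zero).pow 5)
  rw [inv_one, one_pow, mul_one, mul_one] at hlimit
  refine hlimit.congr' ?_
  filter_upwards [eventually_gt_atTop 0,
    hscale.eventually (Real.tendsto_log_atTop.eventually_gt_atTop 0)] with τ hτ hlog
  exact (momentProduct_eq l g tν hK.ne' hτ.ne' hcbar.ne' hlog.ne').symm

theorem fermat_rational_eq_one_iff {x y z n : ℕ} (hz : 0 < z) :
    ((x:ℝ) ^ n + (y:ℝ) ^ n) / (z:ℝ) ^ n = 1 ↔ x ^ n + y ^ n = z ^ n := by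
  rw [div_eq_one_iff_eq (by positivity)]
  exact_mod_cast Iff.rfl

theorem zeta_equivalent_FLT_S1_general (l : ℕ) (cbar : ℝ) (hcbar : 0 < cbar)
    (g : ℝ → ℝ)
    (hquot : ∃ C : ℝ, ∀ᶠ T in atTop,
      |(∫ t in T..(g T), zsq (1/2) t) / (∫ t in T..(g T), |S1 t| ^ (2 * l)) -
        (1 / cbar) * Real.log T| ≤ C)
    (tν : ℕ → ℝ) (htitch : TitchAsymp tν) :
    ((∀ x y z n : ℕ, 0 < x → 0 < y → 0 < z → 3 ≤ n →
      ¬ Tendsto (fun τ : ℝ =>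
        (1/τ) *
        ((∫ t in (4 * Real.pi ^ 5 * (((x:ℝ)^n + (y:ℝ)^n) / (z:ℝ)^n) / (3 * cbar ^ 5) * τ)..(g (4 * Real.pi ^ 5 * (((x:ℝ)^n + (y:ℝ)^n) / (z:ℝ)^n) / (3 * cbar ^ 5) * τ)), |S1 t| ^ (2 * l)) ^ 5) *
        (((∫ t in (4 * Real.pi ^ 5 * (((x:ℝ)^n + (y:ℝ)^n) / (z:ℝ)^n) / (3 * cbar ^ 5) * τ)..(g (4 * Real.pi ^ 5 * (((x:ℝ)^n + (y:ℝ)^n) / (z:ℝ)^n) / (3 * cbar ^ 5) * τ)), zsq (1/2) t) ^ 5)⁻¹) *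
        TitchSum tν (4 * Real.pi ^ 5 * (((x:ℝ)^n + (y:ℝ)^n) / (z:ℝ)^n) / (3 * cbar ^ 5) * τ))
        atTop (nhds 1))
    ↔ (∀ x y z n : ℕ, 0 < x → 0 < y → 0 < z → 3 ≤ n → x^n + y^n ≠ z^n)) := by
  refine forall₄_congr fun x y z n => imp_congr_right fun hx => imp_congr_right fun hy =>
    imp_congr_right fun hz => imp_congr_right fun _ => not_congr ?_
  have hE := tendsto_momentProduct hcbar hquot htitch
    (K := 4 * Real.pi ^ 5 * (((x:ℝ) ^ n + (y:ℝ) ^ n) / (z:ℝ) ^ n) / (3 * cbar ^ 5)) (by positivity)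
  have hlimit : 3 / (4 * Real.pi ^ 5) *
      (4 * Real.pi ^ 5 * (((x:ℝ) ^ n + (y:ℝ) ^ n) / (z:ℝ) ^ n) / (3 * cbar ^ 5)) * cbar ^ 5 =
      ((x:ℝ) ^ n + (y:ℝ) ^ n) / (z:ℝ) ^ n := by
    field_simp
  rw [hlimit] at hE
  exact (hE.tendsto_nhds_iff_eq _).trans (fermat_rational_eq_one_iff hz)

theorem zeta_equivalent_FLT_S1 (l : ℕ) (hl : 0 < l) (cbar : ℝ) (hcbar : 0 < cbar)
    (g : ℝ → ℝ) (hg : ∀ᶠ T in atTop, T < g T)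
    (hquot : ∃ C : ℝ, ∀ᶠ T in atTop,
      |(∫ t in T..(g T), zsq (1/2) t) / (∫ t in T..(g T), |S1 t| ^ (2 * l)) -
        (1 / cbar) * Real.log T| ≤ C)
    (tν : ℕ → ℝ) (hgram : IsGramSeq tν) (htitch : TitchAsymp tν) :
    ((∀ x y z n : ℕ, 0 < x → 0 < y → 0 < z → 3 ≤ n →
      ¬ Tendsto (fun τ : ℝ =>
        (1/τ) *
        ((∫ t in (4 * Real.pi ^ 5 * (((x:ℝ)^n + (y:ℝ)^n) / (z:ℝ)^n) / (3 * cbar ^ 5) * τ)..(g (4 * Real.pi ^ 5 * (((x:ℝ)^n + (y:ℝ)^n) / (z:ℝ)^n) / (3 * cbar ^ 5) * τ)), |S1 t| ^ (2 * l)) ^ 5) *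
        (((∫ t in (4 * Real.pi ^ 5 * (((x:ℝ)^n + (y:ℝ)^n) / (z:ℝ)^n) / (3 * cbar ^ 5) * τ)..(g (4 * Real.pi ^ 5 * (((x:ℝ)^n + (y:ℝ)^n) / (z:ℝ)^n) / (3 * cbar ^ 5) * τ)), zsq (1/2) t) ^ 5)⁻¹) *
        TitchSum tν (4 * Real.pi ^ 5 * (((x:ℝ)^n + (y:ℝ)^n) / (z:ℝ)^n) / (3 * cbar ^ 5) * τ))
        atTop (nhds 1))
    ↔ (∀ x y z n : ℕ, 0 < x → 0 < y → 0 < z → 3 ≤ n → x^n + y^n ≠ z^n)) :=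
  zeta_equivalent_FLT_S1_general l cbar hcbar g hquot tν htitch
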